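/- For every d ≥ 1, rc(Δ_{d+1}) ≤ rc(Δ_d) + 1. Combined with monotonicity rc(Δ_d) ≤ rc(Δ_{d+1}), it follows that the sequence (rc(Δ_d))_d increases by either 0 or 1 at each step. -/

import Mathlib

open scoped BigOperators

def intPts (d : ℕ) : Set (Fin d → ℝ) := {x | ∀ i, ∃ z : ℤ, x i = (z : ℝ)}

noncomputable def rcIn (d : ℕ) (X Y : Set (Fin d → ℝ)) : ℕ∞ :=
  ⨅ (k : ℕ) (_ : ∃ (A : Fin k → Fin d → ℝ) (b : Fin k → ℝ),
      {x ∈ Y | ∀ i, ∑ j, A i j * x j ≤ b i} = X), (k : ℕ∞)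

noncomputable def rc (d : ℕ) (X : Set (Fin d → ℝ)) : ℕ∞ := rcIn d X (intPts d)

def stdDelta (d : ℕ) : Set (Fin d → ℝ) :=
  insert 0 (Set.range fun i : Fin d => fun j => if j = i then (1 : ℝ) else 0)

/-! Given a relaxation `A y ≤ b` of a finite set `X ∋ 0`, the system `A y ≤ (1 - z) b`, `z ≥ 0`
(one more inequality) relaxes the pyramid over `X`. Since `0 ∈ X` gives `b ≥ 0`, an integer point
with `z = 0` lies in `X`; for `z ≥ 1` we get `A y ≤ 0`, so every multiple of `y` satisfies
`A y ≤ b` and lies in the finite set `X`, forcing `y = 0`; and `z ≥ 2` would give `b = 0`, which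
makes `X` a cone and hence `{0}`. Finally `Δ_{d+1}` is the pyramid over `Δ_d`. -/

open Matrix

section Relaxation

variable {d k : ℕ}

lemma zero_mem_intPts : (0 : Fin d → ℝ) ∈ intPts d := fun _ => ⟨0, by simp⟩

lemma natCast_smul_mem_intPts {y : Fin d → ℝ} (n : ℕ) (hy : y ∈ intPts d) :
    (n : ℝ) • y ∈ intPts d := fun i => by
  obtain ⟨z, hz⟩ := hy i
  exact ⟨n * z, by simp [hz]⟩

lemma snoc_mem_intPts {y : Fin d → ℝ} {z : ℝ} :
    (Fin.snoc y z : Fin (d + 1) → ℝ) ∈ intPts (d + 1) ↔ y ∈ intPts d ∧ ∃ n : ℤ, z = n := by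
  simp [intPts, Fin.forall_fin_succ']

def IsRelaxation (A : Matrix (Fin k) (Fin d) ℝ) (b : Fin k → ℝ) (X : Set (Fin d → ℝ)) : Prop :=
  {x ∈ intPts d | A *ᵥ x ≤ b} = X

lemma rc_le_of_isRelaxation {A : Matrix (Fin k) (Fin d) ℝ} {b : Fin k → ℝ}
    {X : Set (Fin d → ℝ)} (h : IsRelaxation A b X) : rc d X ≤ k :=
  iInf₂_le k ⟨A, b, h⟩

lemma rc_le_add_of_forall_isRelaxation {d' m : ℕ} {X : Set (Fin d → ℝ)} {X' : Set (Fin d' → ℝ)}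
    (h : ∀ k (A : Matrix (Fin k) (Fin d) ℝ) (b : Fin k → ℝ), IsRelaxation A b X →
      ∃ (A' : Matrix (Fin (k + m)) (Fin d') ℝ) (b' : Fin (k + m) → ℝ), IsRelaxation A' b' X') :
    rc d' X' ≤ rc d X + m := by
  conv_rhs => rw [rc, rcIn, ENat.iInf₂_add]
  refine le_iInf₂ fun k ⟨A, b, hAb⟩ => ?_
  obtain ⟨A', b', hA'b'⟩ := h k A b hAb
  exact_mod_cast rc_le_of_isRelaxation hA'b'

namespace IsRelaxation

variable {A : Matrix (Fin k) (Fin d) ℝ} {b : Fin k → ℝ} {X : Set (Fin d → ℝ)}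

lemma mem_iff (h : IsRelaxation A b X) {x : Fin d → ℝ} :
    x ∈ X ↔ x ∈ intPts d ∧ A *ᵥ x ≤ b := by
  rw [← h]; rfl

lemma nonneg_of_zero_mem (h : IsRelaxation A b X) (h0 : 0 ∈ X) : 0 ≤ b := by
  simpa using (h.mem_iff.1 h0).2

lemma eq_zero_of_mulVec_nonpos (h : IsRelaxation A b X) (hX : X.Finite) (hb : 0 ≤ b)
    {y : Fin d → ℝ} (hy : y ∈ intPts d) (hAy : A *ᵥ y ≤ 0) : y = 0 := by
  by_contra hy0
  have hmem : ∀ n : ℕ, (n : ℝ) • y ∈ X := fun n => h.mem_iff.2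
    ⟨natCast_smul_mem_intPts n hy, by
      rw [mulVec_smul]; exact (smul_nonpos_of_nonneg_of_nonpos n.cast_nonneg hAy).trans hb⟩
  have hinj : Function.Injective fun n : ℕ => (n : ℝ) • y :=
    (smul_left_injective ℝ hy0).comp Nat.cast_injective
  exact Set.infinite_range_of_injective hinj (hX.subset (Set.range_subset_iff.2 hmem))

end IsRelaxation

end Relaxation

section Pyramid

variable {d k : ℕ}

def pyramid (X : Set (Fin d → ℝ)) : Set (Fin (d + 1) → ℝ) :=
  insert (Fin.snoc (0 : Fin d → ℝ) 1) ((fun y => Fin.snoc y 0) '' X)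

lemma Set.ext_snoc {α : Type*} {S T : Set (Fin (d + 1) → α)}
    (h : ∀ y z, (Fin.snoc y z : Fin (d + 1) → α) ∈ S ↔ Fin.snoc y z ∈ T) : S = T :=
  Set.ext fun x => by simpa only [Fin.snoc_init_self] using h (Fin.init x) (x (Fin.last d))

lemma snoc_mem_pyramid {X : Set (Fin d → ℝ)} {y : Fin d → ℝ} {z : ℝ} :
    (Fin.snoc y z : Fin (d + 1) → ℝ) ∈ pyramid X ↔ (y = 0 ∧ z = 1) ∨ (y ∈ X ∧ z = 0) := by
  simp [pyramid, Fin.snoc_inj, eq_comm]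

def pyramidMatrix (A : Matrix (Fin k) (Fin d) ℝ) (b : Fin k → ℝ) :
    Matrix (Fin (k + 1)) (Fin (d + 1)) ℝ :=
  Fin.snoc (fun i => Fin.snoc (A i) (b i)) (Fin.snoc 0 (-1))

lemma pyramidMatrix_mulVec_snoc_le_iff {A : Matrix (Fin k) (Fin d) ℝ} {b : Fin k → ℝ}
    {y : Fin d → ℝ} {z : ℝ} :
    pyramidMatrix A b *ᵥ Fin.snoc y z ≤ Fin.snoc b 0 ↔ A *ᵥ y ≤ (1 - z) • b ∧ 0 ≤ z := by
  simp only [pyramidMatrix, Pi.le_def, mulVec, dotProduct, Fin.sum_univ_castSucc,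
    Fin.snoc_castSucc, Fin.snoc_last, Fin.forall_fin_succ', Pi.zero_apply, zero_mul,
    Finset.sum_const_zero, neg_mul, one_mul, zero_add, Left.neg_nonpos_iff, Pi.smul_apply,
    smul_eq_mul, and_congr_left_iff]
  exact fun _ => forall_congr' fun i => by constructor <;> intro <;> linarith

theorem isRelaxation_pyramid {A : Matrix (Fin k) (Fin d) ℝ} {b : Fin k → ℝ}
    {X : Set (Fin d → ℝ)} (hX : X.Finite) (h0 : 0 ∈ X) (hX0 : X ≠ {0})
    (h : IsRelaxation A b X) : IsRelaxation (pyramidMatrix A b) (Fin.snoc b 0) (pyramid X) := by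
  have hb := h.nonneg_of_zero_mem h0
  refine Set.ext_snoc fun y z => ?_
  simp only [Set.mem_ofPred_eq, snoc_mem_intPts, pyramidMatrix_mulVec_snoc_le_iff,
    snoc_mem_pyramid]
  constructor
  · rintro ⟨⟨hy, n, rfl⟩, hAy, hn_nonneg⟩
    obtain rfl | hn_pos := (Int.cast_nonneg_iff.1 hn_nonneg).eq_or_lt
    · exact .inr ⟨h.mem_iff.2 ⟨hy, by simpa using hAy⟩, by simp⟩
    have hn_one : (1 : ℝ) ≤ n := by exact_mod_cast hn_pos
    obtain rfl : y = 0 := h.eq_zero_of_mulVec_nonpos hX hb hy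
      (hAy.trans (smul_nonpos_of_nonpos_of_nonneg (by linarith) hb))
    refine .inl ⟨rfl, le_antisymm ?_ hn_one⟩
    by_contra! hn_gt
    -- then `b = 0`, so the relaxation of `X` is a cone and `X = {0}`
    have hb0 : b = 0 :=
      le_antisymm (fun i => nonpos_of_mul_nonneg_right (by simpa using hAy i) (by linarith)) hb
    refine hX0 (Set.eq_singleton_iff_unique_mem.2 ⟨h0, fun x hx => ?_⟩)
    obtain ⟨hx, hAx⟩ := h.mem_iff.1 hx
    exact h.eq_zero_of_mulVec_nonpos hX hb hx (hb0 ▸ hAx)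
  · rintro (⟨rfl, rfl⟩ | ⟨hy, rfl⟩)
    · exact ⟨⟨zero_mem_intPts, 1, by simp⟩, by simp, zero_le_one⟩
    · obtain ⟨hy, hAy⟩ := h.mem_iff.1 hy
      exact ⟨⟨hy, 0, by simp⟩, by simpa using hAy, le_rfl⟩

end Pyramid

theorem rc_pyramid_le {d : ℕ} {X : Set (Fin d → ℝ)} (hX : X.Finite) (h0 : 0 ∈ X) (hX0 : X ≠ {0}) :
    rc (d + 1) (pyramid X) ≤ rc d X + 1 :=
  rc_le_add_of_forall_isRelaxation fun _ _ _ h => ⟨_, _, isRelaxation_pyramid hX h0 hX0 h⟩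

section StdDelta

variable {d : ℕ}

lemma stdDelta_finite : (stdDelta d).Finite :=
  (Set.finite_range _).insert 0

lemma zero_mem_stdDelta : 0 ∈ stdDelta d :=
  Set.mem_insert _ _

lemma stdDelta_ne_singleton_zero (hd : 1 ≤ d) : stdDelta d ≠ {0} := by
  intro h
  have he : (fun j : Fin d => if j = ⟨0, hd⟩ then (1 : ℝ) else 0) ∈ stdDelta d :=
    Set.mem_insert_of_mem _ ⟨_, rfl⟩
  rw [h] at he
  simpa using congrFun he ⟨0, hd⟩

lemma stdDelta_succ : stdDelta (d + 1) = pyramid (stdDelta d) := by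
  refine Set.ext_snoc fun y z => ?_
  simp only [stdDelta, snoc_mem_pyramid, Set.mem_insert_iff, Set.mem_range, funext_iff,
    Pi.zero_apply, Fin.forall_fin_succ', Fin.exists_fin_succ', Fin.snoc_castSucc, Fin.snoc_last,
    Fin.castSucc_inj, Fin.castSucc_ne_last, (Fin.castSucc_ne_last _).symm, ↓reduceIte,
    eq_comm (b := y _), eq_comm (b := z), exists_and_right]
  tauto

end StdDelta

/-- rc(Δ_{d+1}) ≤ rc(Δ_d) + 1. -/
theorem rc_stdDelta_succ_le (d : ℕ) (hd : 1 ≤ d) :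
    rc (d + 1) (stdDelta (d + 1)) ≤ rc d (stdDelta d) + 1 := by
  rw [stdDelta_succ]
  exact rc_pyramid_le stdDelta_finite zero_mem_stdDelta (stdDelta_ne_singleton_zero hd)
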